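/- arXiv:2307.02611 — 2 statements merged into one kernel-verified Lean document; each statement's English description precedes it below -/
import Mathlib

section
/- Let Z be a real d×d matrix, σ a real antisymmetric d×d matrix, and ψ : ℝ^d → ℂ continuous. Define f_t(ξ) := exp( ∫₀ᵗ ψ(exp(τZ) ξ) dτ ) for t ≥ 0, ξ ∈ ℝ^d. Assume that for every t ≥ 0, f_t is twisted positive definite with respect to σ − exp(tZᵀ) σ exp(tZ). Then for every N, all ξ¹,…,ξᴺ ∈ ℝ^d, every c ∈ ℂ^N with ∑_{k=1}^N c_k = 0, and each choice of sign ±, the sum ∑_{k,l=1}^N conj(c_k) · ( ψ(ξ^l − ξ^k) ± (i/2) (ξ^k)ᵀ (σZ + Zᵀσ) ξ^l ) · c_l is a nonnegative real number. -/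
open MeasureTheory Matrix Filter ComplexOrder

/-- The matrix semigroup `S_t = exp (t Z)` generated by a real `d × d` matrix `Z`. -/
noncomputable def expm {d : ℕ} (Z : Matrix (Fin d) (Fin d) ℝ) (t : ℝ) :
    Matrix (Fin d) (Fin d) ℝ :=
  NormedSpace.exp (t • Z)

/-- The Euclidean norm on `ℝ^d`. -/
noncomputable def eucNorm {d : ℕ} (x : Fin d → ℝ) : ℝ :=
  Real.sqrt (∑ i, x i ^ 2)

/-- The characteristic function of a measure on `ℝ^d`. -/
noncomputable def charFun {d : ℕ} (μ : Measure (Fin d → ℝ)) (ξ : Fin d → ℝ) : ℂ :=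
  ∫ x, Complex.exp (Complex.I * ((x ⬝ᵥ ξ : ℝ) : ℂ)) ∂μ

/-- Convolution of two measures on `ℝ^d`. -/
noncomputable def mconv {d : ℕ} (μ ρ : Measure (Fin d → ℝ)) : Measure (Fin d → ℝ) :=
  (μ.prod ρ).map fun p => p.1 + p.2

/-- The `m`-fold convolution power of a measure on `ℝ^d`. -/
noncomputable def convPow {d : ℕ} (ρ : Measure (Fin d → ℝ)) : ℕ → Measure (Fin d → ℝ)
  | 0 => Measure.dirac 0
  | n + 1 => mconv ρ (convPow ρ n)

/-- A probability measure on `ℝ^d` is infinitely divisible if for every `m ≥ 1` it is an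
`m`-fold convolution power of some probability measure. -/
def InfinitelyDivisible {d : ℕ} (μ : Measure (Fin d → ℝ)) : Prop :=
  ∀ m : ℕ, 1 ≤ m → ∃ ρ : Measure (Fin d → ℝ), IsProbabilityMeasure ρ ∧ convPow ρ m = μ

/-- `g : ℝ^d → ℂ` is twisted positive definite with respect to the antisymmetric form `Δ`. -/
def TwistedPosDef {d : ℕ} (Δ : Matrix (Fin d) (Fin d) ℝ) (g : (Fin d → ℝ) → ℂ) : Prop :=
  ∀ (N : ℕ) (ξ : Fin N → (Fin d → ℝ)) (c : Fin N → ℂ),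
    0 ≤ ∑ k : Fin N, ∑ l : Fin N, (starRingEnd ℂ) (c k) * g (ξ l - ξ k) *
      Complex.exp (Complex.I / 2 * (((ξ k) ⬝ᵥ (Δ.mulVec (ξ l)) : ℝ) : ℂ)) * c l

/-- A Lévy measure on `ℝ^d`. -/
def IsLevyMeasure {d : ℕ} (ν : Measure (Fin d → ℝ)) : Prop :=
  ν {0} = 0 ∧
  (∫⁻ η in {η : Fin d → ℝ | eucNorm η < 1}, ENNReal.ofReal (eucNorm η ^ 2) ∂ν) < ⊤ ∧
  ν {η : Fin d → ℝ | 1 ≤ eucNorm η} < ⊤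

/-- The Lévy symbol associated to a generating triplet `(A, ν, α)`. -/
noncomputable def levySymbol {d : ℕ} (α : Fin d → ℝ) (A : Matrix (Fin d) (Fin d) ℝ)
    (ν : Measure (Fin d → ℝ)) (ξ : Fin d → ℝ) : ℂ :=
  Complex.I * ((α ⬝ᵥ ξ : ℝ) : ℂ) - (1 / 2 : ℂ) * ((ξ ⬝ᵥ (A.mulVec ξ) : ℝ) : ℂ) +
    ∫ η, (Complex.exp (Complex.I * ((η ⬝ᵥ ξ : ℝ) : ℂ)) - 1 -
      Complex.I * ((({η : Fin d → ℝ | eucNorm η < 1}).indicator (fun η' => η' ⬝ᵥ ξ) η : ℝ) : ℂ)) ∂ν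

/-- `Ψ` admits the Lévy–Khinchine representation with generating triplet `(A, ν, α)`. -/
def HasTriplet {d : ℕ} (Ψ : (Fin d → ℝ) → ℂ) (A : Matrix (Fin d) (Fin d) ℝ)
    (ν : Measure (Fin d → ℝ)) (α : Fin d → ℝ) : Prop :=
  A.IsSymm ∧ A.PosSemidef ∧ ν {0} = 0 ∧
  (∫⁻ η, ENNReal.ofReal (min (eucNorm η ^ 2) 1) ∂ν) < ⊤ ∧
  ∀ ξ, Ψ ξ = levySymbol α A ν ξ

open scoped Topology

/-! Write `Δₜ = σ - exp(tZᵀ) σ exp(tZ)` and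
`F(t) = ∑ conj(c_k) fₜ(ξˡ - ξᵏ) exp((i/2) (ξᵏ)ᵀ Δₜ ξˡ) c_l`. By hypothesis `F(t) ≥ 0` for
`t ≥ 0`, and `F(0) = |∑ c_k|² = 0` since `f₀ = 1` and `Δ₀ = 0`; hence `F'(0) ≥ 0`. As
`d/dt fₜ(ξ) = ψ(ξ)` and `d/dt Δₜ = -(σZ + Zᵀσ)` at `t = 0`, `F'(0)` is the sum with the minus
sign. An antisymmetric twist can be replaced by its negative (substitute `ξ ↦ -ξ`,
`c ↦ conj c` and swap the summation indices), which gives the plus sign. -/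

theorem HasDerivWithinAt.nonneg_of_le {E : Type*} [NormedAddCommGroup E] [NormedSpace ℝ E]
    [PartialOrder E] [IsOrderedAddMonoid E] [OrderClosedTopology E] [PosSMulMono ℝ E]
    {F : ℝ → E} {F' : E} {a : ℝ} (hF : HasDerivWithinAt F F' (Set.Ioi a) a)
    (hmin : ∀ t > a, F a ≤ F t) : 0 ≤ F' := by
  have hslope : Tendsto (slope F a) (𝓝[>] a) (𝓝 F') := by
    simpa using hasDerivWithinAt_iff_tendsto_slope.mp hF
  refine ge_of_tendsto hslope ?_
  filter_upwards [self_mem_nhdsWithin] with t (ht : a < t)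
  rw [slope_def_module]
  exact smul_nonneg (inv_nonneg.2 (sub_nonneg.2 ht.le)) (sub_nonneg.2 (hmin t ht))

theorem HasDerivAt.dotProduct {𝕜 ι : Type*} [NontriviallyNormedField 𝕜] [Fintype ι]
    {u v : 𝕜 → ι → 𝕜} {u' v' : ι → 𝕜} {t : 𝕜} (hu : HasDerivAt u u' t) (hv : HasDerivAt v v' t) :
    HasDerivAt (fun s => u s ⬝ᵥ v s) (u' ⬝ᵥ v t + u t ⬝ᵥ v') t := by
  simp only [_root_.dotProduct, ← Finset.sum_add_distrib]
  exact HasDerivAt.fun_sum fun i _ =>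
    ((hasDerivAt_pi.1 hu i).mul (hasDerivAt_pi.1 hv i)).congr_deriv (by ring)

theorem HasDerivAt.mulVec {𝕜 m n : Type*} [NontriviallyNormedField 𝕜] [CompleteSpace 𝕜]
    [Fintype m] [Fintype n] (A : Matrix m n 𝕜) {v : 𝕜 → n → 𝕜} {v' : n → 𝕜} {t : 𝕜}
    (hv : HasDerivAt v v' t) :
    HasDerivAt (fun s => A *ᵥ v s) (A *ᵥ v') t :=
  (mulVecLin A).toContinuousLinearMap.hasFDerivAt.comp_hasDerivAt t hv

theorem expm_zero {d : ℕ} (Z : Matrix (Fin d) (Fin d) ℝ) : expm Z 0 = 1 := by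
  simp [expm]

theorem hasDerivAt_expm_mulVec {d : ℕ} (Z : Matrix (Fin d) (Fin d) ℝ) (v : Fin d → ℝ) (t : ℝ) :
    HasDerivAt (fun s => expm Z s *ᵥ v) (expm Z t *ᵥ (Z *ᵥ v)) t := by
  let _ : NormedRing (Matrix (Fin d) (Fin d) ℝ) := Matrix.linftyOpNormedRing
  let _ : NormedAlgebra ℝ (Matrix (Fin d) (Fin d) ℝ) := Matrix.linftyOpNormedAlgebra
  have hexp : HasDerivAt (expm Z) (expm Z t * Z) t := hasDerivAt_exp_smul_const Z t
  rw [mulVec_mulVec]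
  exact ((LinearMap.applyₗ v).comp Matrix.toLin'.toLinearMap).toContinuousLinearMap.hasFDerivAt
    |>.comp_hasDerivAt t hexp

theorem continuous_expm_mulVec {d : ℕ} (Z : Matrix (Fin d) (Fin d) ℝ) (v : Fin d → ℝ) :
    Continuous fun s => expm Z s *ᵥ v :=
  continuous_iff_continuousAt.2 fun t => (hasDerivAt_expm_mulVec Z v t).continuousAt

theorem hasDerivAt_dotProduct_transpose_expm_mul_expm {d : ℕ} (Z σ : Matrix (Fin d) (Fin d) ℝ)
    (v w : Fin d → ℝ) :
    HasDerivAt (fun t => v ⬝ᵥ ((expm Z t)ᵀ * σ * expm Z t) *ᵥ w)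
      (v ⬝ᵥ (σ * Z + Zᵀ * σ) *ᵥ w) 0 := by
  have hform : ∀ t, v ⬝ᵥ ((expm Z t)ᵀ * σ * expm Z t) *ᵥ w
      = (expm Z t *ᵥ v) ⬝ᵥ σ *ᵥ (expm Z t *ᵥ w) := fun t => by
    rw [← mulVec_mulVec, ← mulVec_mulVec, dotProduct_mulVec, vecMul_transpose, dotProduct_mulVec]
  simp only [hform]
  refine ((hasDerivAt_expm_mulVec Z v 0).dotProduct
    ((hasDerivAt_expm_mulVec Z w 0).mulVec σ)).congr_deriv ?_
  simp only [expm_zero, one_mulVec, add_mulVec, dotProduct_add, ← mulVec_mulVec]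
  rw [add_comm, dotProduct_mulVec v Zᵀ, vecMul_transpose]

theorem TwistedPosDef.neg {d : ℕ} {Δ : Matrix (Fin d) (Fin d) ℝ} (hΔ : Δᵀ = -Δ)
    {g : (Fin d → ℝ) → ℂ} (h : TwistedPosDef Δ g) : TwistedPosDef (-Δ) g := by
  intro N ξ c
  refine (h N (-ξ) (starRingEnd ℂ ∘ c)).trans_eq ?_
  rw [Finset.sum_comm]
  refine Finset.sum_congr rfl fun k _ => Finset.sum_congr rfl fun l _ => ?_
  have hform : -ξ l ⬝ᵥ Δ *ᵥ -ξ k = ξ k ⬝ᵥ -Δ *ᵥ ξ l := by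
    rw [mulVec_neg, dotProduct_neg, neg_dotProduct, neg_neg, dotProduct_mulVec,
      ← mulVec_transpose, hΔ, dotProduct_comm]
  simp only [Pi.neg_apply, Function.comp_apply, hform, Complex.conj_conj, neg_sub_neg]
  ring

theorem hasDerivAt_cexp_integral_zero {h : ℝ → ℂ} (hh : Continuous h) :
    HasDerivAt (fun t => Complex.exp (∫ τ in (0 : ℝ)..t, h τ)) (h 0) 0 := by
  simpa using (hh.integral_hasStrictDerivAt 0 0).hasDerivAt.cexp

theorem nonneg_generator_sum_of_twistedPosDef {d N : ℕ} {g : ℝ → (Fin d → ℝ) → ℂ}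
    {φ : (Fin d → ℝ) → ℂ} {Δ : ℝ → Matrix (Fin d) (Fin d) ℝ} {D : Matrix (Fin d) (Fin d) ℝ}
    (hg0 : ∀ ξ, g 0 ξ = 1) (hg : ∀ ξ, HasDerivAt (fun t => g t ξ) (φ ξ) 0)
    (hΔ0 : Δ 0 = 0) (hΔ : ∀ v w, HasDerivAt (fun t => v ⬝ᵥ Δ t *ᵥ w) (v ⬝ᵥ D *ᵥ w) 0)
    (htw : ∀ t > 0, TwistedPosDef (Δ t) (g t)) (ξ : Fin N → Fin d → ℝ) (c : Fin N → ℂ)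
    (hc : ∑ k, c k = 0) :
    0 ≤ ∑ k, ∑ l, starRingEnd ℂ (c k) *
      (φ (ξ l - ξ k) + Complex.I / 2 * ((ξ k ⬝ᵥ D *ᵥ ξ l : ℝ) : ℂ)) * c l := by
  set F : ℝ → ℂ := fun t => ∑ k, ∑ l, starRingEnd ℂ (c k) * g t (ξ l - ξ k) *
    Complex.exp (Complex.I / 2 * ((ξ k ⬝ᵥ Δ t *ᵥ ξ l : ℝ) : ℂ)) * c l
  have hF0 : F 0 = 0 := by
    simp only [F, hg0, hΔ0, zero_mulVec, dotProduct_zero, Complex.ofReal_zero, mul_zero,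
      Complex.exp_zero, mul_one]
    rw [← Finset.sum_mul_sum, ← map_sum, hc, map_zero, zero_mul]
  have hF : HasDerivAt F (∑ k, ∑ l, starRingEnd ℂ (c k) *
      (φ (ξ l - ξ k) + Complex.I / 2 * ((ξ k ⬝ᵥ D *ᵥ ξ l : ℝ) : ℂ)) * c l) 0 := by
    refine HasDerivAt.fun_sum fun k _ => HasDerivAt.fun_sum fun l _ => ?_
    have hphase := ((hΔ (ξ k) (ξ l)).ofReal_comp.const_mul (Complex.I / 2)).cexp
    refine ((((hg (ξ l - ξ k)).const_mul _).fun_mul hphase).mul_const (c l)).congr_deriv ?_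
    simp only [hg0, hΔ0, zero_mulVec, dotProduct_zero, Complex.ofReal_zero, mul_zero,
      Complex.exp_zero]
    ring
  refine hF.hasDerivWithinAt.nonneg_of_le fun t ht => ?_
  rw [hF0]
  exact htw t ht N ξ c

theorem stmt12_general (d : ℕ) (Z σ : Matrix (Fin d) (Fin d) ℝ) (hσ : σᵀ = -σ)
    (ψ : (Fin d → ℝ) → ℂ) (hψcont : Continuous ψ)
    (htw : ∀ t : ℝ, 0 ≤ t →
      TwistedPosDef (σ - (expm Z t)ᵀ * σ * expm Z t)
        (fun ξ => Complex.exp (∫ τ in (0:ℝ)..t, ψ ((expm Z τ).mulVec ξ)))) :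
    ∀ (N : ℕ) (ξ : Fin N → (Fin d → ℝ)) (c : Fin N → ℂ), (∑ k : Fin N, c k = 0) →
      (0 ≤ ∑ k : Fin N, ∑ l : Fin N, (starRingEnd ℂ) (c k) *
          (ψ (ξ l - ξ k) + Complex.I / 2 *
            (((ξ k) ⬝ᵥ ((σ * Z + Zᵀ * σ).mulVec (ξ l)) : ℝ) : ℂ)) * c l) ∧
      (0 ≤ ∑ k : Fin N, ∑ l : Fin N, (starRingEnd ℂ) (c k) *
          (ψ (ξ l - ξ k) - Complex.I / 2 *
            (((ξ k) ⬝ᵥ ((σ * Z + Zᵀ * σ).mulVec (ξ l)) : ℝ) : ℂ)) * c l) := by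
  intro N ξ c hc
  have hΔ0 : σ - (expm Z 0)ᵀ * σ * expm Z 0 = 0 := by simp [expm_zero]
  have hΔanti : ∀ t, (σ - (expm Z t)ᵀ * σ * expm Z t)ᵀ = -(σ - (expm Z t)ᵀ * σ * expm Z t) := by
    intro t
    simp only [transpose_sub, transpose_mul, transpose_transpose, hσ, Matrix.neg_mul,
      Matrix.mul_neg, neg_sub, Matrix.mul_assoc]
    abel
  have hg0 : ∀ ξ : Fin d → ℝ, Complex.exp (∫ τ in (0:ℝ)..0, ψ (expm Z τ *ᵥ ξ)) = 1 := by simp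
  have hg : ∀ ξ, HasDerivAt (fun t => Complex.exp (∫ τ in (0:ℝ)..t, ψ (expm Z τ *ᵥ ξ)))
      (ψ ξ) 0 := fun ξ => by
    simpa [expm_zero] using
      hasDerivAt_cexp_integral_zero (hψcont.comp (continuous_expm_mulVec Z ξ))
  constructor
  · refine nonneg_generator_sum_of_twistedPosDef
      (Δ := fun t => (expm Z t)ᵀ * σ * expm Z t - σ) hg0 hg (by simp [expm_zero]) (fun v w => ?_)
      (fun t ht => by simpa using (htw t ht.le).neg (hΔanti t)) ξ c hc
    simpa only [sub_mulVec, dotProduct_sub] using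
      (hasDerivAt_dotProduct_transpose_expm_mul_expm Z σ v w).sub_const (v ⬝ᵥ σ *ᵥ w)
  · have hminus := nonneg_generator_sum_of_twistedPosDef (D := -(σ * Z + Zᵀ * σ)) hg0 hg hΔ0
      (fun v w => ?_) (fun t ht => htw t ht.le) ξ c hc
    · simpa only [neg_mulVec, dotProduct_neg, Complex.ofReal_neg, mul_neg, ← sub_eq_add_neg]
        using hminus
    simpa only [sub_mulVec, dotProduct_sub, neg_mulVec, dotProduct_neg] using
      (hasDerivAt_dotProduct_transpose_expm_mul_expm Z σ v w).const_sub (v ⬝ᵥ σ *ᵥ w)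

/-- twisted positive definiteness of `f_t(ξ) = exp(∫₀ᵗ ψ(S_τ ξ) dτ)` implies
the conditional positive definiteness of `ψ(ξ) ± (i/2) ξᵀ(σZ + Zᵀσ)ξ`. -/
theorem stmt12 (d : ℕ) (hd : 0 < d) (Z σ : Matrix (Fin d) (Fin d) ℝ) (hσ : σᵀ = -σ)
    (ψ : (Fin d → ℝ) → ℂ) (hψcont : Continuous ψ)
    (htw : ∀ t : ℝ, 0 ≤ t →
      TwistedPosDef (σ - (expm Z t)ᵀ * σ * expm Z t)
        (fun ξ => Complex.exp (∫ τ in (0:ℝ)..t, ψ ((expm Z τ).mulVec ξ)))) :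
    ∀ (N : ℕ) (ξ : Fin N → (Fin d → ℝ)) (c : Fin N → ℂ), (∑ k : Fin N, c k = 0) →
      (0 ≤ ∑ k : Fin N, ∑ l : Fin N, (starRingEnd ℂ) (c k) *
          (ψ (ξ l - ξ k) + Complex.I / 2 *
            (((ξ k) ⬝ᵥ ((σ * Z + Zᵀ * σ).mulVec (ξ l)) : ℝ) : ℂ)) * c l) ∧
      (0 ≤ ∑ k : Fin N, ∑ l : Fin N, (starRingEnd ℂ) (c k) *
          (ψ (ξ l - ξ k) - Complex.I / 2 *
            (((ξ k) ⬝ᵥ ((σ * Z + Zᵀ * σ).mulVec (ξ l)) : ℝ) : ℂ)) * c l) :=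
  stmt12_general d Z σ hσ ψ hψcont htw
end

section
/- Let Z be a real d×d matrix, σ a real antisymmetric d×d matrix, A a real symmetric d×d matrix, and set B := (1/2)(σZ − Zᵀσᵀ). If A ± iB ⪰ 0, then for every t ≥ 0 one has A_t ± (i/2)(S_tᵀ σ S_t − σ) ⪰ 0, where S_t := exp(tZ) and A_t := ∫₀ᵗ S_τᵀ A S_τ dτ. -/
open MeasureTheory Matrix Filter ComplexOrder

/-!
For `c = ±i/2` and `B = Zᵀσ + σZ` (which is `σZ − Zᵀσᵀ` since `σ` is antisymmetric), the matrix
`A + cB` is positive semidefinite, hence so is its congruence `S_τᵀ (A + cB) S_τ` for every `τ`,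
and so is the integral of these over `[0, t]`. Since `d/dτ (S_τᵀ σ S_τ) = S_τᵀ B S_τ`, that integral
is `A_t + c (S_tᵀ σ S_t − σ)`.
-/

noncomputable def expmGramian {d : ℕ} (Z A : Matrix (Fin d) (Fin d) ℝ) (t : ℝ) :
    Matrix (Fin d) (Fin d) ℝ :=
  of fun i j => ∫ τ in (0:ℝ)..t, ((expm Z τ)ᵀ * A * expm Z τ) i j

open intervalIntegral in
theorem Matrix.PosSemidef.intervalIntegral {n 𝕜 : Type*} [Fintype n] [RCLike 𝕜]
    {M : ℝ → Matrix n n 𝕜} {a b : ℝ} (hab : a ≤ b)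
    (hM : ∀ τ ∈ Set.Icc a b, (M τ).PosSemidef)
    (hint : ∀ i j, IntervalIntegrable (fun τ => M τ i j) volume a b) :
    (of fun i j => ∫ τ in a..b, M τ i j).PosSemidef := by
  rw [posSemidef_iff_dotProduct_mulVec]
  refine ⟨?_, fun x => ?_⟩
  · ext i j
    simp only [conjTranspose_apply, of_apply, RCLike.star_def, ← intervalIntegral_conj]
    exact integral_congr fun τ hτ => (hM τ (Set.uIcc_of_le hab ▸ hτ)).1.apply i j
  · have hterm i j : IntervalIntegrable (fun τ => star (x i) * (M τ i j * x j)) volume a b :=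
      ((hint i j).mul_const _).const_mul _
    have hquad : star x ⬝ᵥ (of fun i j => ∫ τ in a..b, M τ i j) *ᵥ x
        = ∫ τ in a..b, star x ⬝ᵥ M τ *ᵥ x := by
      simp only [dotProduct, mulVec, of_apply, Finset.mul_sum, Pi.star_apply]
      rw [integral_finsetSum fun i _ => by
        simpa only [Finset.sum_fn] using IntervalIntegrable.sum Finset.univ fun j _ => hterm i j]
      refine Finset.sum_congr rfl fun i _ => ?_
      rw [integral_finsetSum fun j _ => hterm i j]
      simp only [intervalIntegral.integral_const_mul, intervalIntegral.integral_mul_const]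
    rw [hquad, integral_of_le hab]
    exact integral_nonneg_of_ae <| (ae_restrict_iff' measurableSet_Ioc).2 <|
      ae_of_all _ fun τ hτ => (hM τ (Set.Ioc_subset_Icc_self hτ)).dotProduct_mulVec_nonneg x

theorem Matrix.PosSemidef.intervalIntegral_map_ofReal_add_smul {n : Type*} [Fintype n]
    {F G : ℝ → Matrix n n ℝ} {a b : ℝ} (c : ℂ) (hab : a ≤ b)
    (hFG : ∀ τ ∈ Set.Icc a b,
      ((F τ).map Complex.ofReal + c • (G τ).map Complex.ofReal).PosSemidef)
    (hF : ∀ i j, IntervalIntegrable (fun τ => F τ i j) volume a b)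
    (hG : ∀ i j, IntervalIntegrable (fun τ => G τ i j) volume a b) :
    ((of fun i j => ∫ τ in a..b, F τ i j).map Complex.ofReal +
      c • (of fun i j => ∫ τ in a..b, G τ i j).map Complex.ofReal).PosSemidef := by
  have hF' i j : IntervalIntegrable (fun τ => (F τ i j : ℂ)) volume a b :=
    ⟨(hF i j).1.ofReal, (hF i j).2.ofReal⟩
  have hG' i j : IntervalIntegrable (fun τ => c * (G τ i j : ℂ)) volume a b :=
    IntervalIntegrable.const_mul ⟨(hG i j).1.ofReal, (hG i j).2.ofReal⟩ c
  have hentries : (of fun i j => ∫ τ in a..b, F τ i j).map Complex.ofReal +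
      c • (of fun i j => ∫ τ in a..b, G τ i j).map Complex.ofReal
      = of fun i j =>
          ∫ τ in a..b, ((F τ).map Complex.ofReal + c • (G τ).map Complex.ofReal) i j := by
    ext i j
    simp only [add_apply, smul_apply, map_apply, of_apply, smul_eq_mul,
      intervalIntegral.integral_add (hF' i j) (hG' i j),
      intervalIntegral.integral_const_mul, intervalIntegral.integral_ofReal]
  rw [hentries]
  exact PosSemidef.intervalIntegral hab hFG fun i j => (hF' i j).add (hG' i j)

theorem Matrix.conjTranspose_map_ofReal_mul_add_smul_mul {m n : Type*} [Fintype m]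
    (S : Matrix m n ℝ) (X Y : Matrix m m ℝ) (c : ℂ) :
    (S.map Complex.ofReal)ᴴ * (X.map Complex.ofReal + c • Y.map Complex.ofReal) *
        S.map Complex.ofReal
      = (Sᵀ * X * S).map Complex.ofReal + c • (Sᵀ * Y * S).map Complex.ofReal := by
  have hT : (S.map Complex.ofReal)ᴴ = Sᵀ.map Complex.ofReal := by
    ext; simp
  have hcoe : (Complex.ofReal : ℝ → ℂ) = ⇑Complex.ofRealHom := rfl
  rw [hT, Matrix.mul_add, Matrix.add_mul, Matrix.mul_smul, Matrix.smul_mul, hcoe,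
    ← Matrix.map_mul, ← Matrix.map_mul, ← Matrix.map_mul, ← Matrix.map_mul]

section OperatorNorm

open scoped Matrix.Norms.Operator

theorem HasDerivAt.matrix_apply {m n : Type*} [Fintype m] [Fintype n]
    {f : ℝ → Matrix m n ℝ} {f' : Matrix m n ℝ} {t : ℝ} (hf : HasDerivAt f f' t) (i : m) (j : n) :
    HasDerivAt (fun τ => f τ i j) (f' i j) t :=
  (entryLinearMap ℝ ℝ i j).toContinuousLinearMap.hasFDerivAt.comp_hasDerivAt t hf

variable {d : ℕ}

theorem hasDerivAt_expm (Z : Matrix (Fin d) (Fin d) ℝ) (t : ℝ) :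
    HasDerivAt (expm Z) (Z * expm Z t) t :=
  hasDerivAt_exp_smul_const' Z t

theorem continuous_expm (Z : Matrix (Fin d) (Fin d) ℝ) : Continuous (expm Z) :=
  continuous_iff_continuousAt.2 fun t => (hasDerivAt_expm Z t).continuousAt

theorem hasDerivAt_transpose_expm_mul_mul_expm (Z σ : Matrix (Fin d) (Fin d) ℝ) (t : ℝ) :
    HasDerivAt (fun τ => (expm Z τ)ᵀ * σ * expm Z τ)
      ((expm Z t)ᵀ * (Zᵀ * σ + σ * Z) * expm Z t) t := by
  have hS := hasDerivAt_expm Z t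
  have hT : HasDerivAt (fun τ => (expm Z τ)ᵀ) ((Z * expm Z t)ᵀ) t :=
    (transposeLinearEquiv (Fin d) (Fin d) ℝ ℝ).toContinuousLinearEquiv.hasFDerivAt.comp_hasDerivAt
      t hS
  refine ((hT.mul_const σ).mul hS).congr_deriv ?_
  simp only [transpose_mul, Matrix.mul_add, Matrix.add_mul, Matrix.mul_assoc]

end OperatorNorm

theorem continuous_transpose_expm_mul_mul_expm {d : ℕ} (Z W : Matrix (Fin d) (Fin d) ℝ) :
    Continuous fun τ => (expm Z τ)ᵀ * W * expm Z τ := by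
  have := continuous_expm Z
  fun_prop

theorem transpose_expm_mul_mul_expm_sub {d : ℕ} (Z σ : Matrix (Fin d) (Fin d) ℝ) (t : ℝ) :
    (expm Z t)ᵀ * σ * expm Z t - σ = expmGramian Z (Zᵀ * σ + σ * Z) t := by
  ext i j
  rw [expmGramian, of_apply, intervalIntegral.integral_eq_sub_of_hasDerivAt
    (fun τ _ => (hasDerivAt_transpose_expm_mul_mul_expm Z σ τ).matrix_apply i j)
    (((continuous_transpose_expm_mul_mul_expm Z _).matrix_elem i j).intervalIntegrable 0 t)]
  simp [expm]

theorem posSemidef_expmGramian_map_ofReal_add_smul {d : ℕ}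
    (Z σ A : Matrix (Fin d) (Fin d) ℝ) (c : ℂ)
    (hpos : (A.map Complex.ofReal + c • (Zᵀ * σ + σ * Z).map Complex.ofReal).PosSemidef)
    {t : ℝ} (ht : 0 ≤ t) :
    ((expmGramian Z A t).map Complex.ofReal +
      c • ((expm Z t)ᵀ * σ * expm Z t - σ).map Complex.ofReal).PosSemidef := by
  have hint (W : Matrix (Fin d) (Fin d) ℝ) (i j : Fin d) :
      IntervalIntegrable (fun τ => ((expm Z τ)ᵀ * W * expm Z τ) i j) volume 0 t :=
    ((continuous_transpose_expm_mul_mul_expm Z W).matrix_elem i j).intervalIntegrable _ _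
  rw [transpose_expm_mul_mul_expm_sub]
  refine PosSemidef.intervalIntegral_map_ofReal_add_smul c ht (fun τ _ => ?_) (hint A) (hint _)
  rw [← conjTranspose_map_ofReal_mul_add_smul_mul]
  exact hpos.conjTranspose_mul_mul_same _

theorem stmt14_general (d : ℕ) (Z σ : Matrix (Fin d) (Fin d) ℝ) (hσ : σᵀ = -σ)
    (A : Matrix (Fin d) (Fin d) ℝ)
    (hpos : (A.map Complex.ofReal +
        Complex.I • (((1/2 : ℝ) • (σ * Z - Zᵀ * σᵀ)).map Complex.ofReal)).PosSemidef ∧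
      (A.map Complex.ofReal -
        Complex.I • (((1/2 : ℝ) • (σ * Z - Zᵀ * σᵀ)).map Complex.ofReal)).PosSemidef) :
    ∀ t : ℝ, 0 ≤ t →
      ((Matrix.of fun i j =>
          ∫ τ in (0:ℝ)..t, ((expm Z τ)ᵀ * A * expm Z τ) i j).map Complex.ofReal +
        (Complex.I / 2) •
          (((expm Z t)ᵀ * σ * expm Z t - σ).map Complex.ofReal)).PosSemidef ∧
      ((Matrix.of fun i j =>
          ∫ τ in (0:ℝ)..t, ((expm Z τ)ᵀ * A * expm Z τ) i j).map Complex.ofReal -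
        (Complex.I / 2) •
          (((expm Z t)ᵀ * σ * expm Z t - σ).map Complex.ofReal)).PosSemidef := by
  intro t ht
  have hB : σ * Z - Zᵀ * σᵀ = Zᵀ * σ + σ * Z := by
    rw [hσ, Matrix.mul_neg, sub_neg_eq_add, add_comm]
  have hhalf (c : ℂ) : c • ((1/2 : ℝ) • (Zᵀ * σ + σ * Z)).map Complex.ofReal
      = (c / 2) • (Zᵀ * σ + σ * Z).map Complex.ofReal := by
    ext i j
    simp only [Matrix.smul_apply, map_apply, smul_eq_mul, Complex.ofReal_mul]
    push_cast
    ring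
  obtain ⟨hplus, hminus⟩ := hpos
  rw [hB, hhalf] at hplus
  rw [hB, sub_eq_add_neg, ← neg_smul, hhalf, neg_div] at hminus
  refine ⟨posSemidef_expmGramian_map_ofReal_add_smul Z σ A _ hplus ht, ?_⟩
  rw [sub_eq_add_neg, ← neg_smul]
  exact posSemidef_expmGramian_map_ofReal_add_smul Z σ A _ hminus ht

/-- if `A ± iB ⪰ 0` with `B = (1/2)(σZ − Zᵀσᵀ)`, then for every `t ≥ 0`
`A_t ± (i/2)(S_tᵀ σ S_t − σ) ⪰ 0`, where `A_t = ∫₀ᵗ S_τᵀ A S_τ dτ`. -/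
theorem stmt14 (d : ℕ) (hd : 0 < d) (Z σ : Matrix (Fin d) (Fin d) ℝ) (hσ : σᵀ = -σ)
    (A : Matrix (Fin d) (Fin d) ℝ) (hA : A.IsSymm)
    (hpos : (A.map Complex.ofReal +
        Complex.I • (((1/2 : ℝ) • (σ * Z - Zᵀ * σᵀ)).map Complex.ofReal)).PosSemidef ∧
      (A.map Complex.ofReal -
        Complex.I • (((1/2 : ℝ) • (σ * Z - Zᵀ * σᵀ)).map Complex.ofReal)).PosSemidef) :
    ∀ t : ℝ, 0 ≤ t →
      ((Matrix.of fun i j =>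
          ∫ τ in (0:ℝ)..t, ((expm Z τ)ᵀ * A * expm Z τ) i j).map Complex.ofReal +
        (Complex.I / 2) •
          (((expm Z t)ᵀ * σ * expm Z t - σ).map Complex.ofReal)).PosSemidef ∧
      ((Matrix.of fun i j =>
          ∫ τ in (0:ℝ)..t, ((expm Z τ)ᵀ * A * expm Z τ) i j).map Complex.ofReal -
        (Complex.I / 2) •
          (((expm Z t)ᵀ * σ * expm Z t - σ).map Complex.ofReal)).PosSemidef :=
  stmt14_general d Z σ hσ A hpos
end
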